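/- If m, n are positive integers with m/(n+1) ≥ (1/2)·log₂ 7, then 2^m ≥ rk(W^{⊗n}), and hence there exist local linear maps transforming GHZ^{⊗m} into W^{⊗n} (party-wise regrouped). -/

import Mathlib

/-!
In one copy, `∑ₛ ±(|0⟩ + s t |1⟩)^{⊗3} = (|0⟩ + t|1⟩)^{⊗3} - |000⟩ = t W + t² W' + t³ |111⟩`.
Taking the tensor product over `n` copies, `∑_S sign S · (tiltedKet t S)^{⊗3}` is a polynomial
`t^n W^{⊗n} + … + t^{3n} |1…1⟩` in `t` with only `2^n` product terms per value of `t`; evaluating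
it at the `2n + 1` nonzero points `t = 1, …, 2n + 1` and solving a Vandermonde system extracts the
coefficient `W^{⊗n}`, so `rk(W^{⊗n}) ≤ (2n + 1) 2^n`. The hypothesis says `7^{n+1} ≤ 4^m`, which
forces `(2n + 1) 2^n ≤ 2^m`, and a GHZ state of rank `2^m` maps onto every tensor of rank at most
`2^m`.
-/

open TensorProduct

/-- Tripartite tensor rank: minimal number of product vectors summing to `ψ`. -/
noncomputable def tRank {A B C : Type*} [AddCommGroup A] [Module ℂ A]
    [AddCommGroup B] [Module ℂ B] [AddCommGroup C] [Module ℂ C]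
    (ψ : A ⊗[ℂ] (B ⊗[ℂ] C)) : ℕ :=
  sInf {r | ∃ (a : Fin r → A) (b : Fin r → B) (c : Fin r → C),
    ψ = ∑ i, a i ⊗ₜ[ℂ] (b i ⊗ₜ[ℂ] c i)}

/-- `(ℂ²)^{⊗n}`, realized as functions on `n`-bit strings. -/
abbrev V (n : ℕ) : Type := (Fin n → Bool) → ℂ

/-- the computational-basis vector `|s⟩` of `n` qubits. -/
noncomputable def qb {n : ℕ} (s : Fin n → Bool) : V n := Pi.single s 1

/-- `W^{⊗n}` regrouped party-wise: in copy `k` the excitation goes to party `f k`. -/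
noncomputable def Wn (n : ℕ) : V n ⊗[ℂ] (V n ⊗[ℂ] V n) :=
  ∑ f : Fin n → Fin 3,
    qb (fun k => decide (f k = 0)) ⊗ₜ[ℂ]
      (qb (fun k => decide (f k = 1)) ⊗ₜ[ℂ] qb (fun k => decide (f k = 2)))

/-- `GHZ^{⊗n}` regrouped party-wise: `∑ₓ |x⟩|x⟩|x⟩`. -/
noncomputable def GHZn (n : ℕ) : V n ⊗[ℂ] (V n ⊗[ℂ] V n) :=
  ∑ x : Fin n → Bool, qb x ⊗ₜ[ℂ] (qb x ⊗ₜ[ℂ] qb x)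

section Rank

variable {A B C : Type*} [AddCommGroup A] [Module ℂ A] [AddCommGroup B] [Module ℂ B]
  [AddCommGroup C] [Module ℂ C]

lemma exists_eq_sum_tmul_tmul (ψ : A ⊗[ℂ] (B ⊗[ℂ] C)) :
    ∃ (r : ℕ) (a : Fin r → A) (b : Fin r → B) (c : Fin r → C),
      ψ = ∑ i, a i ⊗ₜ[ℂ] (b i ⊗ₜ[ℂ] c i) := by
  induction ψ with
  | zero => exact ⟨0, finZeroElim, finZeroElim, finZeroElim, by simp⟩
  | tmul a y =>
    obtain ⟨k, b, c, rfl⟩ := TensorProduct.exists_sum_tmul_eq y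
    exact ⟨k, fun _ => a, b, c, TensorProduct.tmul_sum _ _ _⟩
  | add x y hx hy =>
    obtain ⟨r₁, a₁, b₁, c₁, rfl⟩ := hx
    obtain ⟨r₂, a₂, b₂, c₂, rfl⟩ := hy
    exact ⟨r₁ + r₂, Fin.addCases a₁ a₂, Fin.addCases b₁ b₂, Fin.addCases c₁ c₂,
      by simp [Fin.sum_univ_add]⟩

lemma exists_eq_sum_of_tRank (ψ : A ⊗[ℂ] (B ⊗[ℂ] C)) :
    ∃ (a : Fin (tRank ψ) → A) (b : Fin (tRank ψ) → B) (c : Fin (tRank ψ) → C),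
      ψ = ∑ i, a i ⊗ₜ[ℂ] (b i ⊗ₜ[ℂ] c i) :=
  Nat.sInf_mem (exists_eq_sum_tmul_tmul ψ)

lemma tRank_le_card {ι : Type*} [Fintype ι] {ψ : A ⊗[ℂ] (B ⊗[ℂ] C)}
    (a : ι → A) (b : ι → B) (c : ι → C) (hψ : ψ = ∑ i, a i ⊗ₜ[ℂ] (b i ⊗ₜ[ℂ] c i)) :
    tRank ψ ≤ Fintype.card ι := by
  let e := (Fintype.equivFin ι).symm
  exact Nat.sInf_le ⟨a ∘ e, b ∘ e, c ∘ e, hψ.trans (e.sum_comp _).symm⟩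

lemma map_GHZn {m : ℕ} (LA : V m →ₗ[ℂ] A) (LB : V m →ₗ[ℂ] B) (LC : V m →ₗ[ℂ] C) :
    TensorProduct.map LA (TensorProduct.map LB LC) (GHZn m)
      = ∑ x, LA (qb x) ⊗ₜ[ℂ] (LB (qb x) ⊗ₜ[ℂ] LC (qb x)) := by
  simp only [GHZn, map_sum, TensorProduct.map_tmul]

lemma exists_linearMap_qb {D : Type*} [AddCommGroup D] [Module ℂ D] {m : ℕ}
    (g : (Fin m → Bool) → D) : ∃ L : V m →ₗ[ℂ] D, ∀ x, L (qb x) = g x :=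
  ⟨(Pi.basisFun ℂ _).constr ℂ g, fun x => by
    rw [qb, ← Pi.basisFun_apply, Module.Basis.constr_basis]⟩

/-- Send the basis vectors of `V m` to the factors of a minimal decomposition, the rest to `0`. -/
theorem exists_map_GHZn_eq_of_tRank_le {m : ℕ} (ψ : A ⊗[ℂ] (B ⊗[ℂ] C))
    (hψ : tRank ψ ≤ 2 ^ m) :
    ∃ (LA : V m →ₗ[ℂ] A) (LB : V m →ₗ[ℂ] B) (LC : V m →ₗ[ℂ] C),
      TensorProduct.map LA (TensorProduct.map LB LC) (GHZn m) = ψ := by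
  obtain ⟨a, b, c, hψ_eq⟩ := exists_eq_sum_of_tRank ψ
  obtain ⟨ι⟩ : Nonempty (Fin (tRank ψ) ↪ (Fin m → Bool)) :=
    Function.Embedding.nonempty_of_card_le (by simpa using hψ)
  obtain ⟨LA, hLA⟩ := exists_linearMap_qb (Function.extend ι a 0)
  obtain ⟨LB, hLB⟩ := exists_linearMap_qb (Function.extend ι b 0)
  obtain ⟨LC, hLC⟩ := exists_linearMap_qb (Function.extend ι c 0)
  refine ⟨LA, LB, LC, ?_⟩
  rw [map_GHZn, hψ_eq]
  refine (Fintype.sum_of_injective ι ι.injective _ _ (fun x hx => ?_) fun i => ?_).symm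
  · simp [hLA, hLB, hLC, Function.extend_apply' _ _ _ hx]
  · simp [hLA, hLB, hLC, ι.injective.extend_apply]

end Rank

open Matrix in
lemma exists_sum_mul_pow_add_eq_ite {K : Type*} [Field K] {N : ℕ} {v : Fin N → K}
    (hv : Function.Injective v) (hv0 : ∀ i, v i ≠ 0) (n : ℕ) :
    ∃ w : Fin N → K, ∀ d < N, ∑ i, w i * v i ^ (n + d) = if d = 0 then 1 else 0 := by
  let M : Matrix (Fin N) (Fin N) K := (vandermonde v)ᵀ * diagonal fun i => v i ^ n
  have hM : IsUnit M := by
    rw [isUnit_iff_isUnit_det, det_mul, det_transpose, det_diagonal]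
    exact (isUnit_iff_ne_zero.mpr (det_vandermonde_ne_zero_iff.mpr hv)).mul
      (isUnit_iff_ne_zero.mpr (Finset.prod_ne_zero_iff.mpr fun i _ => pow_ne_zero n (hv0 i)))
  obtain ⟨w, hw⟩ :=
    mulVec_surjective_iff_isUnit.mpr hM fun d : Fin N => if (d : ℕ) = 0 then 1 else 0
  refine ⟨w, fun d hd => ?_⟩
  rw [← congrFun hw ⟨d, hd⟩]
  simp only [M, mulVec, dotProduct, mul_diagonal, transpose_apply, vandermonde_apply]
  exact Finset.sum_congr rfl fun i _ => by ring

lemma sum_mul_prod_ite_pow {K : Type*} [Field K] {n : ℕ} {v w : Fin (2 * n + 1) → K}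
    (hw : ∀ d < 2 * n + 1, ∑ i, w i * v i ^ (n + d) = if d = 0 then 1 else 0)
    (c : Fin n → ℕ) (hc : ∀ k, c k ≤ 3) :
    ∑ i, w i * ∏ k, (if c k = 0 then 0 else v i ^ c k) = ∏ k, if c k = 1 then 1 else 0 := by
  by_cases hc0 : ∃ k, c k = 0
  · obtain ⟨k, hk⟩ := hc0
    have hzero : ∀ i, ∏ k, (if c k = 0 then 0 else v i ^ c k) = 0 := fun i =>
      Finset.prod_eq_zero (Finset.mem_univ k) (if_pos hk)
    simp only [hzero, mul_zero, Finset.sum_const_zero]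
    exact (Finset.prod_eq_zero (Finset.mem_univ k) (by simp [hk])).symm
  push Not at hc0
  have hpos : ∀ k ∈ Finset.univ, 1 ≤ c k := fun k _ => Nat.one_le_iff_ne_zero.mpr (hc0 k)
  have hlow : n ≤ ∑ k, c k := by simpa using Finset.sum_le_sum hpos
  have hhigh : ∑ k, c k ≤ 3 * n := by
    simpa [mul_comm] using Finset.sum_le_sum fun k (_ : k ∈ Finset.univ) => hc k
  have hone : ∑ k, c k = n ↔ ∀ k, c k = 1 := by
    simpa [eq_comm] using Finset.sum_eq_sum_iff_of_le hpos
  calc ∑ i, w i * ∏ k, (if c k = 0 then 0 else v i ^ c k)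
      = ∑ i, w i * v i ^ (n + (∑ k, c k - n)) := by
        simp only [hc0, if_false, Finset.prod_pow_eq_pow_sum, Nat.add_sub_cancel' hlow]
    _ = if ∑ k, c k - n = 0 then 1 else 0 := hw _ (by omega)
    _ = ∏ k, if c k = 1 then 1 else 0 := by
        rw [Fintype.prod_boole]
        simp only [← hone]
        exact if_congr (by omega) rfl rfl

section WState

variable {n : ℕ}

def excitations (a b c : Bool) : ℕ := a.toNat + b.toNat + c.toNat

/-- The product vector `⊗ₖ (|0⟩ + t [S k] |1⟩)`. -/
noncomputable def tiltedKet (t : ℂ) (S : Fin n → Bool) : V n :=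
  fun x => ∏ k, if x k then (if S k then t else 0) else 1

noncomputable def signOf (S : Fin n → Bool) : ℂ := ∏ k, if S k then 1 else -1

variable (n) in
noncomputable abbrev tripleBasis :
    Module.Basis ((Fin n → Bool) × (Fin n → Bool) × (Fin n → Bool)) ℂ (V n ⊗[ℂ] (V n ⊗[ℂ] V n)) :=
  (Pi.basisFun ℂ _).tensorProduct ((Pi.basisFun ℂ _).tensorProduct (Pi.basisFun ℂ _))

lemma tripleBasis_repr_tmul (a b c : V n) (x y z : Fin n → Bool) :
    (tripleBasis n).repr (a ⊗ₜ[ℂ] (b ⊗ₜ[ℂ] c)) (x, y, z) = a x * (b y * c z) := by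
  simp [Module.Basis.tensorProduct_repr_tmul_apply, mul_comm]

lemma qb_apply (s x : Fin n → Bool) : qb s x = ∏ k, if x k = s k then 1 else 0 := by
  simp [qb, Pi.single_apply, Fintype.prod_boole, funext_iff]

lemma tripleBasis_repr_Wn (x y z : Fin n → Bool) :
    (tripleBasis n).repr (Wn n) (x, y, z)
      = ∏ k, if excitations (x k) (y k) (z k) = 1 then 1 else 0 := by
  simp only [Wn, map_sum, Finsupp.coe_finsetSum, Finset.sum_apply, tripleBasis_repr_tmul,
    qb_apply, ← Finset.prod_mul_distrib]
  rw [← Fintype.prod_sum fun k (j : Fin 3) => (if x k = decide (j = 0) then (1 : ℂ) else 0) *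
    ((if y k = decide (j = 1) then 1 else 0) * if z k = decide (j = 2) then 1 else 0)]
  refine Finset.prod_congr rfl fun k _ => ?_
  cases x k <;> cases y k <;> cases z k <;> simp [Fin.sum_univ_three, excitations]

lemma sum_signOf_mul_tiltedKet (t : ℂ) (x y z : Fin n → Bool) :
    ∑ S, signOf S * (tiltedKet t S x * (tiltedKet t S y * tiltedKet t S z))
      = ∏ k, if excitations (x k) (y k) (z k) = 0 then 0
          else t ^ excitations (x k) (y k) (z k) := by
  simp only [signOf, tiltedKet, ← Finset.prod_mul_distrib]
  rw [← Fintype.prod_sum fun k (s : Bool) => (if s then (1 : ℂ) else -1) *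
    ((if x k then (if s then t else 0) else 1) *
      ((if y k then (if s then t else 0) else 1) * (if z k then (if s then t else 0) else 1)))]
  refine Finset.prod_congr rfl fun k _ => ?_
  cases x k <;> cases y k <;> cases z k <;> simp [excitations] <;> ring

lemma exists_Wn_eq_sum (n : ℕ) : ∃ w : Fin (2 * n + 1) → ℂ,
    Wn n = ∑ p : Fin (2 * n + 1) × (Fin n → Bool),
      (w p.1 * signOf p.2) • tiltedKet ((p.1 : ℕ) + 1) p.2 ⊗ₜ[ℂ]
        (tiltedKet ((p.1 : ℕ) + 1) p.2 ⊗ₜ[ℂ] tiltedKet ((p.1 : ℕ) + 1) p.2) := by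
  have hinj : Function.Injective fun i : Fin (2 * n + 1) => ((i : ℕ) : ℂ) + 1 := fun i j hij =>
    Fin.ext (by exact_mod_cast add_right_cancel hij)
  obtain ⟨w, hw⟩ := exists_sum_mul_pow_add_eq_ite hinj (fun i => Nat.cast_add_one_ne_zero i) n
  refine ⟨w, (tripleBasis n).ext_elem_iff.mpr fun ⟨x, y, z⟩ => ?_⟩
  have hle : ∀ k, excitations (x k) (y k) (z k) ≤ 3 := fun k => by
    unfold excitations; linarith [Bool.toNat_le (x k), Bool.toNat_le (y k), Bool.toNat_le (z k)]
  rw [tripleBasis_repr_Wn, ← sum_mul_prod_ite_pow hw _ hle]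
  simp only [map_sum, Finsupp.coe_finsetSum, Finset.sum_apply, Fintype.sum_prod_type,
    map_smul, Finsupp.smul_apply, tripleBasis_repr_tmul, smul_eq_mul,
    mul_assoc, ← Finset.mul_sum, sum_signOf_mul_tiltedKet]

lemma tRank_Wn_le (n : ℕ) : tRank (Wn n) ≤ (2 * n + 1) * 2 ^ n := by
  obtain ⟨w, hw⟩ := exists_Wn_eq_sum n
  simpa using tRank_le_card _ _ _ hw

end WState

lemma four_mul_sq_mul_four_pow_lt (n : ℕ) : 4 * n ^ 2 * 4 ^ n < 7 ^ (n + 1) := by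
  obtain hn | hn := lt_or_ge n 4
  · interval_cases n <;> norm_num
  induction n, hn using Nat.le_induction with
  | base => norm_num
  | succ n hn ih =>
    have hstep : 4 * (n + 1) ^ 2 ≤ 7 * n ^ 2 := by nlinarith
    calc 4 * (n + 1) ^ 2 * 4 ^ (n + 1) = 4 * (4 * (n + 1) ^ 2) * 4 ^ n := by ring
      _ ≤ 4 * (7 * n ^ 2) * 4 ^ n := by gcongr
      _ < 7 * 7 ^ (n + 1) := by nlinarith
      _ = 7 ^ (n + 1 + 1) := by ring

lemma two_mul_add_one_mul_two_pow_le {m n : ℕ} (h : 7 ^ (n + 1) ≤ 4 ^ m) :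
    (2 * n + 1) * 2 ^ n ≤ 2 ^ m := by
  have hnm : n ≤ m := by
    have : 4 ^ n < 4 ^ m := calc
      4 ^ n ≤ 7 ^ n := Nat.pow_le_pow_left (by norm_num) n
      _ < 7 ^ (n + 1) := Nat.pow_lt_pow_succ (by norm_num)
      _ ≤ 4 ^ m := h
    exact ((Nat.pow_lt_pow_iff_right (by norm_num)).mp this).le
  obtain ⟨k, rfl⟩ := Nat.exists_eq_add_of_le hnm
  have hk : (2 * n) ^ 2 < (2 ^ k) ^ 2 := by
    have h4 := (four_mul_sq_mul_four_pow_lt n).trans_le h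
    rw [pow_add, mul_comm (4 ^ n)] at h4
    calc (2 * n) ^ 2 = 4 * n ^ 2 := by ring
      _ < 4 ^ k := Nat.lt_of_mul_lt_mul_right h4
      _ = (2 ^ k) ^ 2 := by rw [← pow_mul, mul_comm, pow_mul]; norm_num
  calc (2 * n + 1) * 2 ^ n ≤ 2 ^ k * 2 ^ n := by
        gcongr
        exact lt_of_pow_lt_pow_left₀ 2 (by positivity) hk
    _ = 2 ^ (n + k) := by ring

lemma seven_pow_le_four_pow {m n : ℕ} (h : (m : ℝ) / (n + 1) ≥ (1 / 2) * Real.logb 2 7) :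
    7 ^ (n + 1) ≤ 4 ^ m := by
  have hlog : ((n + 1 : ℕ) : ℝ) * Real.logb 2 7 ≤ (m : ℝ) * Real.logb 2 4 := by
    rw [show (4 : ℝ) = 2 ^ (2 : ℕ) by norm_num, Real.logb_pow, Real.logb_self_eq_one (by norm_num)]
    rw [ge_iff_le, le_div_iff₀ (by positivity)] at h
    push_cast
    linarith
  rw [← Real.logb_pow, ← Real.logb_pow,
    Real.logb_le_logb (by norm_num) (by positivity) (by positivity)] at hlog
  exact_mod_cast hlog

theorem GHZ_to_W_rate_general (m n : ℕ)
    (h : (m : ℝ) / (n + 1) ≥ (1 / 2) * Real.logb 2 7) :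
    tRank (Wn n) ≤ 2 ^ m ∧
    ∃ (LA LB LC : V m →ₗ[ℂ] V n),
      (TensorProduct.map LA (TensorProduct.map LB LC)) (GHZn m) = Wn n := by
  have hrank : tRank (Wn n) ≤ 2 ^ m :=
    (tRank_Wn_le n).trans (two_mul_add_one_mul_two_pow_le (seven_pow_le_four_pow h))
  exact ⟨hrank, exists_map_GHZn_eq_of_tRank_le (Wn n) hrank⟩

theorem GHZ_to_W_rate (m n : ℕ) (hm : 0 < m) (hn : 0 < n)
    (h : (m : ℝ) / (n + 1) ≥ (1 / 2) * Real.logb 2 7) :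
    tRank (Wn n) ≤ 2 ^ m ∧
    ∃ (LA LB LC : V m →ₗ[ℂ] V n),
      (TensorProduct.map LA (TensorProduct.map LB LC)) (GHZn m) = Wn n :=
  GHZ_to_W_rate_general m n h
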